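/- arXiv:1512.01956 — 5 statements merged into one kernel-verified Lean document; each statement's English description precedes it below -/
import Mathlib

section
/- Let p > 1 and u : ℝᴺ → ℝ with negative part u₋ = max(-u,0). Then for all x, y, one has −|u(x)−u(y)|^{p−2}(u(x)−u(y)) · (u₋(x)−u₋(y)) ≥ |u₋(x)−u₋(y)|^p. -/
/-! The map `t ↦ max (-t) 0` is antitone and 1-Lipschitz. With `s = u x - u y` and `t` the
difference of negative parts, antitonicity makes the left side `|s| ^ (p - 1) * |t|`, and
`|t| ≤ |s|` bounds this below by `|t| ^ p`. -/

lemma abs_rpow_le_neg_mul_of_mul_nonpos_of_abs_le {p s t : ℝ} (hp : 1 ≤ p) (hst : s * t ≤ 0)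
    (hts : |t| ≤ |s|) : |t| ^ p ≤ -(|s| ^ (p - 2) * s) * t := by
  rcases eq_or_ne s 0 with rfl | hs
  · obtain rfl : t = 0 := by simpa using hts
    simp [Real.zero_rpow (by linarith : p ≠ 0)]
  have hs' : 0 < |s| := abs_pos.mpr hs
  have hrhs : -(|s| ^ (p - 2) * s) * t = |s| ^ (p - 1) * |t| := by
    rw [show p - 1 = (p - 2) + 1 by ring, Real.rpow_add_one hs'.ne', mul_assoc, ← abs_mul,
      abs_of_nonpos hst]
    ring
  have hlhs : |t| ^ p = |t| ^ (p - 1) * |t| := by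
    rw [← Real.rpow_add_one' (abs_nonneg t) (by linarith), sub_add_cancel]
  rw [hrhs, hlhs]
  gcongr

lemma abs_max_neg_sub_max_neg_le (a b : ℝ) : |max (-a) 0 - max (-b) 0| ≤ |a - b| :=
  (abs_max_sub_max_le_abs (-a) (-b) 0).trans_eq (by rw [neg_sub_neg, abs_sub_comm])

lemma sub_mul_max_neg_sub_max_neg_nonpos (a b : ℝ) : (a - b) * (max (-a) 0 - max (-b) 0) ≤ 0 := by
  rcases le_total a b with h | h
  · exact mul_nonpos_of_nonpos_of_nonneg (sub_nonpos.mpr h)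
      (sub_nonneg.mpr (max_le_max (neg_le_neg h) le_rfl))
  · exact mul_nonpos_of_nonneg_of_nonpos (sub_nonneg.mpr h)
      (sub_nonpos.mpr (max_le_max (neg_le_neg h) le_rfl))

theorem stmt_2 (N : ℕ) (p : ℝ) (hp : 1 < p)
    (u : EuclideanSpace ℝ (Fin N) → ℝ) :
    ∀ x y : EuclideanSpace ℝ (Fin N),
      -(|u x - u y| ^ (p - 2) * (u x - u y)) * (max (-u x) 0 - max (-u y) 0) ≥
        |max (-u x) 0 - max (-u y) 0| ^ p := fun x y =>
  abs_rpow_le_neg_mul_of_mul_nonpos_of_abs_le hp.le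
    (sub_mul_max_neg_sub_max_neg_nonpos (u x) (u y)) (abs_max_neg_sub_max_neg_le (u x) (u y))
end

section
/- Let N > ps with s ∈ (0,1), p > 1, and let u ∈ L^{p*}(ℝᴺ) with p* = Np/(N−ps). Then lim_{δ→0⁺} δᴺ ∫_{|x|≥δ} |u(x)|^p / |x|^{N+ps} dx = 0. -/
/-!
Put `t = p s`, `w = |u|^p ∈ L^q` with `q = N/(N - t)`, and let `q' = N/t` be the conjugate
exponent. On `{δ ≤ |x|}` factor `δ^N |x|^{-(N+t)} = (δ/|x|)^t · δ^{N-t} |x|^{-N}`. By Hölder,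
`δ^N ∫_{|x| ≥ δ} w |x|^{-(N+t)}` is at most `(∫_{|x| ≥ δ} w^q (δ/|x|)^{tq})^{1/q}` times the
`L^{q'}` norm of `δ^{N-t} |x|^{-N}` on `{δ ≤ |x|}`. The radial integral
`∫_{|x| ≥ δ} |x|^{-b} = c δ^{N-b}` makes that second factor independent of `δ`. The first factor
tends to `0` by dominated convergence: on the region `(δ/|x|)^{tq} ≤ 1`, and it tends to `0`
pointwise.
-/

open MeasureTheory Filter Set Module Metric Topology
open scoped ENNReal

theorem tendsto_setLIntegral_mul_rpow_div_norm {E : Type*} [NormedAddCommGroup E]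
    [MeasurableSpace E] [OpensMeasurableSpace E] (μ : Measure E) {γ : ℝ} (hγ : 0 < γ)
    {v : E → ℝ≥0∞} (hv : AEMeasurable v μ) (hv_fin : ∫⁻ x, v x ∂μ ≠ ∞) :
    Tendsto (fun δ : ℝ ↦ ∫⁻ x in {x | δ ≤ ‖x‖}, v x * ENNReal.ofReal ((δ / ‖x‖) ^ γ) ∂μ)
      (𝓝[>] 0) (𝓝 0) := by
  simp_rw [← lintegral_indicator (measurableSet_le measurable_const measurable_norm)]
  rw [← lintegral_zero]
  refine tendsto_lintegral_filter_of_dominated_convergence' v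
    (Eventually.of_forall fun δ ↦ (hv.mul (by fun_prop)).indicator
      (measurableSet_le measurable_const measurable_norm)) ?_ hv_fin ?_
  · filter_upwards [self_mem_nhdsWithin] with δ (hδ : 0 < δ)
    refine ae_of_all _ fun x ↦ ?_
    by_cases hx : δ ≤ ‖x‖
    · rw [indicator_of_mem (show x ∈ {x : E | δ ≤ ‖x‖} from hx)]
      refine mul_le_of_le_one_right' (ENNReal.ofReal_le_one.2 (Real.rpow_le_one ?_ ?_ hγ.le))
      · positivity
      · exact div_le_one_of_le₀ hx (norm_nonneg x)
    · simp [hx]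
  · filter_upwards [ae_lt_top' hv hv_fin] with x hx
    have hlim : Tendsto (fun δ : ℝ ↦ v x * ENNReal.ofReal ((δ / ‖x‖) ^ γ)) (𝓝[>] 0) (𝓝 0) := by
      have hδ : Tendsto (fun δ : ℝ ↦ δ) (𝓝[>] 0) (𝓝 0) := nhdsWithin_le_nhds
      simpa [Real.zero_rpow hγ.ne'] using ENNReal.Tendsto.const_mul (ENNReal.tendsto_ofReal
        ((hδ.div_const ‖x‖).rpow_const (Or.inr hγ.le))) (Or.inr hx.ne)
    exact tendsto_of_tendsto_of_tendsto_of_le_of_le tendsto_const_nhds hlim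
      (fun δ ↦ zero_le) (fun δ ↦ indicator_le_self _ _ x)

section Tail

variable {E : Type*} [NormedAddCommGroup E] [NormedSpace ℝ E] [FiniteDimensional ℝ E]
  [MeasurableSpace E] [BorelSpace E] (μ : Measure E) [μ.IsAddHaarMeasure]

theorem setLIntegral_norm_rpow_neg_tail [Nontrivial E] {b δ : ℝ} (hb : finrank ℝ E < b)
    (hδ : 0 < δ) :
    ∫⁻ x in {x : E | δ ≤ ‖x‖}, ENNReal.ofReal (‖x‖ ^ (-b)) ∂μ =
      ENNReal.ofReal (finrank ℝ E * μ.real (ball 0 1) / (b - finrank ℝ E) *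
        δ ^ ((finrank ℝ E : ℝ) - b)) := by
  set n := finrank ℝ E
  have hn : 1 ≤ n := finrank_pos
  let f : ℝ → ℝ := (Ici δ).indicator (· ^ (-b))
  have hf : (fun x : E ↦ f ‖x‖) = {x : E | δ ≤ ‖x‖}.indicator (‖·‖ ^ (-b)) := by
    ext x; simp [f, indicator]
  have hradial : (fun y ↦ y ^ (n - 1) • f y) = (Ici δ).indicator (· ^ ((n : ℝ) - 1 - b)) := by
    ext y
    by_cases hy : δ ≤ y
    · have hy0 : 0 < y := hδ.trans_le hy
      simp only [f, smul_eq_mul, indicator_of_mem (mem_Ici.2 hy)]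
      rw [← Real.rpow_natCast, ← Real.rpow_add hy0, Nat.cast_sub hn, Nat.cast_one]
      ring_nf
    · simp [f, hy]
  have hexp : (n : ℝ) - 1 - b < -1 := by linarith
  have hS : MeasurableSet {x : E | δ ≤ ‖x‖} := measurableSet_le measurable_const measurable_norm
  have hint : IntegrableOn (fun x : E ↦ ‖x‖ ^ (-b)) {x | δ ≤ ‖x‖} μ := by
    rw [← integrable_indicator_iff hS, ← hf, integrable_fun_norm_addHaar, hradial, IntegrableOn,
      integrable_indicator_iff measurableSet_Ici, IntegrableOn,
      Measure.restrict_restrict measurableSet_Ici, inter_eq_left.2 (Ici_subset_Ioi.2 hδ),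
      ← IntegrableOn, integrableOn_Ici_iff_integrableOn_Ioi]
    exact integrableOn_Ioi_rpow_of_lt hexp hδ
  have hval : ∫ x in {x : E | δ ≤ ‖x‖}, ‖x‖ ^ (-b) ∂μ =
      n * μ.real (ball 0 1) / (b - n) * δ ^ ((n : ℝ) - b) := by
    rw [← integral_indicator hS, ← hf, integral_fun_norm_addHaar, hradial,
      setIntegral_indicator measurableSet_Ici, inter_eq_right.2 (Ici_subset_Ioi.2 hδ),
      integral_Ici_eq_integral_Ioi, integral_Ioi_rpow_of_lt hexp hδ]
    have : (n : ℝ) - b ≠ 0 := by linarith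
    have : b - n ≠ 0 := by linarith
    rw [nsmul_eq_mul, smul_eq_mul, show (finrank ℝ E : ℝ) = n from rfl,
      show (n : ℝ) - 1 - b + 1 = n - b by ring]
    field_simp
    ring
  rw [← hval, ofReal_integral_eq_lintegral_ofReal hint
    (ae_of_all _ fun x ↦ Real.rpow_nonneg (norm_nonneg x) _)]

theorem setLIntegral_ofReal_rpow_mul_norm_rpow_neg_tail [Nontrivial E] {t δ : ℝ} (ht : 0 < t)
    (htn : t < finrank ℝ E) (hδ : 0 < δ) :
    ∫⁻ x in {x : E | δ ≤ ‖x‖},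
        ENNReal.ofReal (δ ^ ((finrank ℝ E : ℝ) - t) * ‖x‖ ^ (-(finrank ℝ E : ℝ))) ^
          ((finrank ℝ E : ℝ) / t) ∂μ =
      ENNReal.ofReal (t / (finrank ℝ E - t) * μ.real (ball 0 1)) := by
  set n : ℝ := (finrank ℝ E : ℝ)
  have hpow : ∀ x : E, ENNReal.ofReal (δ ^ (n - t) * ‖x‖ ^ (-n)) ^ (n / t) =
      ENNReal.ofReal (δ ^ ((n - t) * (n / t))) * ENNReal.ofReal (‖x‖ ^ (-(n * (n / t)))) := by
    intro x
    have : 0 ≤ n / t := by positivity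
    rw [ENNReal.ofReal_rpow_of_nonneg (by positivity) this,
      Real.mul_rpow (by positivity) (by positivity), ← Real.rpow_mul hδ.le,
      ← Real.rpow_mul (norm_nonneg x), ENNReal.ofReal_mul (by positivity), neg_mul]
  have hb : n < n * (n / t) := by
    rw [lt_mul_iff_one_lt_right (ht.trans htn), one_lt_div ht]; exact htn
  simp_rw [hpow]
  rw [lintegral_const_mul' _ _ ENNReal.ofReal_ne_top, setLIntegral_norm_rpow_neg_tail μ hb hδ,
    ← ENNReal.ofReal_mul (by positivity)]
  congr 1
  have hnt : n - t ≠ 0 := by linarith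
  have hn : n ≠ 0 := by linarith
  rw [show ((finrank ℝ E : ℕ) : ℝ) = n from rfl, mul_left_comm, ← Real.rpow_add hδ,
    show (n - t) * (n / t) + (n - n * (n / t)) = 0 by field_simp; ring, Real.rpow_zero, mul_one]
  field_simp

theorem rpow_mul_setLIntegral_tail_le [Nontrivial E] {t δ : ℝ} (ht : 0 < t)
    (htn : t < finrank ℝ E) (hδ : 0 < δ) {w : E → ℝ≥0∞} (hw : AEMeasurable w μ) :
    ENNReal.ofReal (δ ^ (finrank ℝ E : ℝ)) *
        ∫⁻ x in {x : E | δ ≤ ‖x‖}, w x * ENNReal.ofReal (‖x‖ ^ (-((finrank ℝ E : ℝ) + t))) ∂μ ≤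
      (∫⁻ x in {x : E | δ ≤ ‖x‖}, w x ^ ((finrank ℝ E : ℝ) / (finrank ℝ E - t)) *
          ENNReal.ofReal ((δ / ‖x‖) ^ (t * ((finrank ℝ E : ℝ) / (finrank ℝ E - t)))) ∂μ) ^
          ((finrank ℝ E - t) / finrank ℝ E) *
        ENNReal.ofReal (t / (finrank ℝ E - t) * μ.real (ball 0 1)) ^ (t / finrank ℝ E) := by
  set n : ℝ := (finrank ℝ E : ℝ)
  have hnt : 0 < n - t := by linarith
  have hq : (n / (n - t)).HolderConjugate (n / t) := by
    rw [Real.holderConjugate_iff, one_lt_div hnt, inv_div, inv_div]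
    refine ⟨by linarith, ?_⟩
    have : n ≠ 0 := by linarith
    field_simp
    ring
  have hsplit : EqOn
      (fun x ↦ ENNReal.ofReal (δ ^ n) * (w x * ENNReal.ofReal (‖x‖ ^ (-(n + t)))))
      (fun x ↦ (w x * ENNReal.ofReal ((δ / ‖x‖) ^ t)) *
        ENNReal.ofReal (δ ^ (n - t) * ‖x‖ ^ (-n))) {x : E | δ ≤ ‖x‖} := by
    intro x (hx : δ ≤ ‖x‖)
    have hx0 : 0 < ‖x‖ := hδ.trans_le hx
    have : δ ^ n * ‖x‖ ^ (-(n + t)) = (δ / ‖x‖) ^ t * (δ ^ (n - t) * ‖x‖ ^ (-n)) := by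
      rw [Real.div_rpow hδ.le hx0.le, Real.rpow_sub hδ, Real.rpow_neg hx0.le,
        Real.rpow_neg hx0.le, Real.rpow_add hx0]
      field_simp
    dsimp only
    rw [mul_left_comm, ← ENNReal.ofReal_mul (by positivity), this,
      ENNReal.ofReal_mul (by positivity), mul_assoc]
  calc _ = ∫⁻ x in {x : E | δ ≤ ‖x‖}, (w x * ENNReal.ofReal ((δ / ‖x‖) ^ t)) *
        ENNReal.ofReal (δ ^ (n - t) * ‖x‖ ^ (-n)) ∂μ := by
        rw [← lintegral_const_mul' _ _ ENNReal.ofReal_ne_top]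
        exact setLIntegral_congr_fun (measurableSet_le measurable_const measurable_norm) hsplit
    _ ≤ _ := ENNReal.lintegral_mul_le_Lp_mul_Lq _ hq (hw.restrict.mul (by fun_prop)) (by fun_prop)
    _ = _ := by
      rw [setLIntegral_ofReal_rpow_mul_norm_rpow_neg_tail μ ht htn hδ, one_div_div, one_div_div]
      congr 2
      refine lintegral_congr fun x ↦ ?_
      rw [ENNReal.mul_rpow_of_nonneg _ _ (by positivity),
        ENNReal.ofReal_rpow_of_nonneg (by positivity) (by positivity),
        ← Real.rpow_mul (by positivity)]

theorem tendsto_rpow_mul_setLIntegral_tail {t : ℝ} (ht : 0 < t) (htn : t < finrank ℝ E)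
    {w : E → ℝ≥0∞} (hw : AEMeasurable w μ)
    (hw_fin : ∫⁻ x, w x ^ ((finrank ℝ E : ℝ) / (finrank ℝ E - t)) ∂μ ≠ ∞) :
    Tendsto (fun δ : ℝ ↦ ENNReal.ofReal (δ ^ (finrank ℝ E : ℝ)) *
        ∫⁻ x in {x : E | δ ≤ ‖x‖}, w x * ENNReal.ofReal (‖x‖ ^ (-((finrank ℝ E : ℝ) + t))) ∂μ)
      (𝓝[>] 0) (𝓝 0) := by
  have : Nontrivial E := nontrivial_of_finrank_pos (by exact_mod_cast ht.trans htn)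
  set n : ℝ := (finrank ℝ E : ℝ)
  have hnt : 0 < n - t := by linarith
  have hweighted := tendsto_setLIntegral_mul_rpow_div_norm μ (γ := t * (n / (n - t)))
    (mul_pos ht (div_pos (ht.trans htn) hnt)) (hw.pow_const _) hw_fin
  have hbound := ENNReal.Tendsto.mul_const (hweighted.ennrpow_const ((n - t) / n))
    (b := ENNReal.ofReal (t / (n - t) * μ.real (ball 0 1)) ^ (t / n))
    (Or.inr (ENNReal.rpow_ne_top_of_nonneg (by positivity) ENNReal.ofReal_ne_top))
  rw [ENNReal.zero_rpow_of_pos (div_pos hnt (ht.trans htn)), zero_mul] at hbound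
  exact tendsto_of_tendsto_of_tendsto_of_le_of_le' tendsto_const_nhds hbound
    (Eventually.of_forall fun _ ↦ zero_le)
    (eventually_nhdsWithin_of_forall fun δ hδ ↦ rpow_mul_setLIntegral_tail_le μ ht htn hδ hw)

end Tail

theorem lintegral_enorm_rpow_rpow_ne_top {α : Type*} [MeasurableSpace α] {μ : Measure α}
    {f : α → ℝ} {p q : ℝ} (hp : 0 < p) (hq : 0 < q) (hf : MemLp f (ENNReal.ofReal (p * q)) μ) :
    ∫⁻ x, (‖f x‖ₑ ^ p) ^ q ∂μ ≠ ∞ := by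
  have hpq : 0 < p * q := mul_pos hp hq
  simp_rw [← ENNReal.rpow_mul]
  simpa [ENNReal.toReal_ofReal hpq.le] using (lintegral_rpow_enorm_lt_top_of_eLpNorm_lt_top
    (ENNReal.ofReal_pos.2 hpq).ne' ENNReal.ofReal_ne_top hf.2).ne

theorem setIntegral_abs_rpow_div_norm_rpow {E : Type*} [NormedAddCommGroup E]
    [MeasurableSpace E] [OpensMeasurableSpace E] {μ : Measure E} {f : E → ℝ}
    (hf : AEStronglyMeasurable f μ) {p : ℝ} (hp : 0 ≤ p) (a : ℝ) (S : Set E) :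
    ∫ x in S, |f x| ^ p / ‖x‖ ^ a ∂μ =
      (∫⁻ x in S, ‖f x‖ₑ ^ p * ENNReal.ofReal (‖x‖ ^ (-a)) ∂μ).toReal := by
  have hmeas : AEStronglyMeasurable (fun x ↦ |f x| ^ p / ‖x‖ ^ a) μ :=
    ((hf.aemeasurable.abs.pow_const p).div
      (measurable_norm.pow_const _).aemeasurable).aestronglyMeasurable
  rw [integral_eq_lintegral_of_nonneg_ae (ae_of_all _ fun x ↦ by positivity) hmeas.restrict]
  congr 1
  refine lintegral_congr fun x ↦ ?_
  rw [div_eq_mul_inv, ← Real.rpow_neg (norm_nonneg x), ENNReal.ofReal_mul (by positivity),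
    Real.enorm_eq_ofReal_abs, ENNReal.ofReal_rpow_of_nonneg (abs_nonneg _) hp]

theorem stmt_3 (N : ℕ) (s p : ℝ) (hp : 1 < p) (hs : s ∈ Ioo (0:ℝ) 1)
    (hN : p * s < N) (u : EuclideanSpace ℝ (Fin N) → ℝ)
    (hu : MemLp u (ENNReal.ofReal (N * p / (N - p * s))) volume) :
    Tendsto
      (fun δ : ℝ => δ ^ (N : ℝ) *
        ∫ x in {x : EuclideanSpace ℝ (Fin N) | δ ≤ ‖x‖},
          |u x| ^ p / ‖x‖ ^ ((N : ℝ) + p * s))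
      (nhdsWithin 0 (Ioi 0)) (nhds 0) := by
  have hp0 : 0 < p := by linarith
  have hps : 0 < p * s := mul_pos hp0 hs.1
  have hfin : ∫⁻ x, (‖u x‖ₑ ^ p) ^ ((N : ℝ) / (N - p * s)) ≠ ∞ := by
    refine lintegral_enorm_rpow_rpow_ne_top hp0 (div_pos (hps.trans hN) (by linarith)) ?_
    rwa [← mul_div_assoc, mul_comm p]
  have hlim := tendsto_rpow_mul_setLIntegral_tail volume hps
    (by rwa [finrank_euclideanSpace_fin]) (hu.1.enorm.pow_const p)
    (by rw [finrank_euclideanSpace_fin]; exact hfin)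
  rw [finrank_euclideanSpace_fin] at hlim
  have hreal := (ENNReal.tendsto_toReal ENNReal.zero_ne_top).comp hlim
  rw [ENNReal.toReal_zero] at hreal
  refine hreal.congr' (eventually_nhdsWithin_of_forall fun δ (hδ : 0 < δ) ↦ ?_)
  dsimp only [Function.comp_apply]
  rw [ENNReal.toReal_mul, ENNReal.toReal_ofReal (by positivity),
    setIntegral_abs_rpow_div_norm_rpow hu.1 hp0.le]
end

section
/- Let p ≤ q and u ∈ W^{s,p}_0(Ω) be a weak solution of (−Δ_p)^s u = |u|^{q−2}u with u₊ ≠ 0. Then [u₊]_{s,p}^p ≤ ∫_Ω u₊^q dx, with strict inequality if also u₋ ≠ 0. -/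
/-
Testing the weak formulation with `u₊` turns its right-hand side into `∫_Ω u₊^q`. Its left-hand
integrand is squeezed by the elementary inequalities
`|a₊ - b₊|^p ≤ (a - b)^{p-1} (a₊ - b₊) ≤ |a - b|^p`: from below by the integrand of `[u₊]^p`,
from above by that of `[u]^p`, which is integrable. The lower bound is strict when `a > 0 > b`,
and if `u₊` and `u₋` are both nontrivial, such pairs `(u x, u y)` occur on a set of positive
product measure.
-/

open MeasureTheory Filter Set

noncomputable def gagliardo (N : ℕ) (s p : ℝ) (u : EuclideanSpace ℝ (Fin N) → ℝ) : ℝ :=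
  ∫ x, ∫ y, |u x - u y| ^ p / ‖x - y‖ ^ ((N : ℝ) + p * s)

def gagliardoFinite (N : ℕ) (s p : ℝ) (u : EuclideanSpace ℝ (Fin N) → ℝ) : Prop :=
  (∫⁻ x, ∫⁻ y, ENNReal.ofReal (|u x - u y| ^ p / ‖x - y‖ ^ ((N : ℝ) + p * s))) ≠ ⊤

def memW (N : ℕ) (s p : ℝ) (Ω : Set (EuclideanSpace ℝ (Fin N)))
    (u : EuclideanSpace ℝ (Fin N) → ℝ) : Prop :=
  AEStronglyMeasurable u volume ∧ gagliardoFinite N s p u ∧ ∀ x ∉ Ω, u x = 0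

def nontrivial' (N : ℕ) (u : EuclideanSpace ℝ (Fin N) → ℝ) : Prop :=
  ¬ u =ᵐ[(volume : Measure (EuclideanSpace ℝ (Fin N)))] 0

/-- `t^{p-1} := |t|^{p-2} t`. -/
noncomputable def sgnPow (p t : ℝ) : ℝ := |t| ^ (p - 2) * t

/-- weak solution of `(-Δ_p)^s u = |u|^{q-2} u` in `Ω`, `u = 0` outside `Ω`. -/
def isWeakSolution (N : ℕ) (s p q : ℝ) (Ω : Set (EuclideanSpace ℝ (Fin N)))
    (u : EuclideanSpace ℝ (Fin N) → ℝ) : Prop :=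
  memW N s p Ω u ∧
    ∀ φ : EuclideanSpace ℝ (Fin N) → ℝ, memW N s p Ω φ →
      (∫ x, ∫ y, sgnPow p (u x - u y) * (φ x - φ y) / ‖x - y‖ ^ ((N : ℝ) + p * s)) =
        ∫ x in Ω, |u x| ^ (q - 2) * u x * φ x

open Function

lemma sgnPow_neg (p t : ℝ) : sgnPow p (-t) = -sgnPow p t := by
  simp [sgnPow]

lemma sgnPow_of_pos (p : ℝ) {t : ℝ} (ht : 0 < t) : sgnPow p t = t ^ (p - 1) := by
  rw [sgnPow, abs_of_pos ht, ← Real.rpow_add_one ht.ne']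
  ring_nf

@[fun_prop]
lemma measurable_sgnPow (p : ℝ) : Measurable (sgnPow p) := by
  unfold sgnPow
  fun_prop

lemma abs_max_sub_max_rpow_le_sgnPow_mul {p : ℝ} (hp : 1 ≤ p) (a b : ℝ) :
    |max a 0 - max b 0| ^ p ≤ sgnPow p (a - b) * (max a 0 - max b 0) := by
  wlog hba : b ≤ a generalizing a b
  · have h := this b a (le_of_not_ge hba)
    rwa [abs_sub_comm, ← neg_sub a b, sgnPow_neg, ← neg_sub (max a 0), neg_mul_neg] at h
  set c := max a 0 - max b 0
  have hc0 : 0 ≤ c := sub_nonneg.2 (max_le_max hba le_rfl)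
  have hct : c ≤ a - b := by
    have h := abs_max_sub_max_le_abs a b 0
    rw [abs_of_nonneg (sub_nonneg.2 hba)] at h
    exact (le_abs_self c).trans h
  rcases hc0.eq_or_lt with hc | hc
  · rw [← hc, abs_zero, Real.zero_rpow (by linarith), mul_zero]
  · calc |c| ^ p = c ^ (p - 1) * c := by
          rw [abs_of_pos hc, ← Real.rpow_add_one hc.ne']
          ring_nf
      _ ≤ (a - b) ^ (p - 1) * c := by gcongr
      _ = sgnPow p (a - b) * c := by rw [sgnPow_of_pos p (hc.trans_le hct)]

lemma sgnPow_mul_max_sub_max_le_abs_rpow (p a b : ℝ) :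
    sgnPow p (a - b) * (max a 0 - max b 0) ≤ |a - b| ^ p := by
  rcases eq_or_ne (a - b) 0 with h | h
  · rw [sgnPow, h, mul_zero, zero_mul]
    positivity
  · have ht : 0 < |a - b| := abs_pos.2 h
    calc sgnPow p (a - b) * (max a 0 - max b 0)
        = |a - b| ^ (p - 2) * ((a - b) * (max a 0 - max b 0)) := by rw [sgnPow, mul_assoc]
      _ ≤ |a - b| ^ (p - 2) * (|a - b| * |a - b|) := by
          refine mul_le_mul_of_nonneg_left ?_ (by positivity)
          calc (a - b) * (max a 0 - max b 0) ≤ |a - b| * |max a 0 - max b 0| :=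
                (le_abs_self _).trans (abs_mul _ _).le
            _ ≤ |a - b| * |a - b| :=
                mul_le_mul_of_nonneg_left (abs_max_sub_max_le_abs a b 0) (abs_nonneg _)
      _ = |a - b| ^ p := by
          rw [← mul_assoc, ← Real.rpow_add_one ht.ne', ← Real.rpow_add_one ht.ne']
          ring_nf

lemma abs_max_sub_max_rpow_lt_sgnPow_mul {p a b : ℝ} (hp : 1 < p) (ha : 0 < a) (hb : b < 0) :
    |max a 0 - max b 0| ^ p < sgnPow p (a - b) * (max a 0 - max b 0) := by
  rw [max_eq_left ha.le, max_eq_right hb.le, sub_zero, abs_of_pos ha,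
    sgnPow_of_pos p (by linarith)]
  conv_lhs => rw [← sub_add_cancel p 1, Real.rpow_add_one ha.ne']
  gcongr
  linarith

lemma abs_rpow_sub_two_mul_self_mul_max {q : ℝ} (hq : q ≠ 0) (t : ℝ) :
    |t| ^ (q - 2) * t * max t 0 = max t 0 ^ q := by
  rcases le_or_gt t 0 with ht | ht
  · rw [max_eq_right ht, mul_zero, Real.zero_rpow hq]
  · rw [max_eq_left ht.le, abs_of_pos ht, ← Real.rpow_add_one ht.ne', ← Real.rpow_add_one ht.ne']
    ring_nf

lemma measure_setOf_pos_ne_zero {α : Type*} [MeasurableSpace α] {μ : Measure α} {u : α → ℝ}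
    (h : ¬ (fun x => max (u x) 0) =ᵐ[μ] 0) : μ {x | 0 < u x} ≠ 0 := by
  contrapose! h
  have hae : ∀ᵐ x ∂μ, ¬ 0 < u x := ae_iff.2 (by simpa using h)
  filter_upwards [hae] with x hx
  simpa using not_lt.1 hx

section DoubleIntegral

variable {α : Type*} [MeasurableSpace α] {μ : Measure α} [SFinite μ] {f g F : α → α → ℝ}

lemma integrable_uncurry_of_le_of_lintegral_ne_top
    (hf : AEStronglyMeasurable (uncurry f) (μ.prod μ)) (hf0 : ∀ x y, 0 ≤ f x y)
    (hfF : ∀ x y, f x y ≤ F x y) (hF : ∫⁻ x, ∫⁻ y, ENNReal.ofReal (F x y) ∂μ ∂μ ≠ ⊤) :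
    Integrable (uncurry f) (μ.prod μ) := by
  refine ⟨hf, (hasFiniteIntegral_iff_ofReal (ae_of_all _ fun z : α × α => hf0 z.1 z.2)).2 ?_⟩
  rw [lintegral_prod (fun z : α × α => ENNReal.ofReal (f z.1 z.2)) hf.aemeasurable.ennreal_ofReal]
  exact (lintegral_mono fun x => lintegral_mono fun y =>
    ENNReal.ofReal_le_ofReal (hfF x y)).trans_lt hF.lt_top

lemma integral_integral_le_of_le (hf : AEStronglyMeasurable (uncurry f) (μ.prod μ))
    (hg : AEStronglyMeasurable (uncurry g) (μ.prod μ)) (hf0 : ∀ x y, 0 ≤ f x y)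
    (hfg : ∀ x y, f x y ≤ g x y) (hgF : ∀ x y, g x y ≤ F x y)
    (hF : ∫⁻ x, ∫⁻ y, ENNReal.ofReal (F x y) ∂μ ∂μ ≠ ⊤) :
    ∫ x, ∫ y, f x y ∂μ ∂μ ≤ ∫ x, ∫ y, g x y ∂μ ∂μ := by
  have hfi := integrable_uncurry_of_le_of_lintegral_ne_top hf hf0
    (fun x y => (hfg x y).trans (hgF x y)) hF
  have hgi := integrable_uncurry_of_le_of_lintegral_ne_top hg
    (fun x y => (hf0 x y).trans (hfg x y)) hgF hF
  rw [integral_integral hfi, integral_integral hgi]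
  exact integral_mono hfi hgi fun z => hfg z.1 z.2

lemma integral_integral_lt_of_measure_setOf_lt_ne_zero
    (hf : AEStronglyMeasurable (uncurry f) (μ.prod μ))
    (hg : AEStronglyMeasurable (uncurry g) (μ.prod μ)) (hf0 : ∀ x y, 0 ≤ f x y)
    (hfg : ∀ x y, f x y ≤ g x y) (hgF : ∀ x y, g x y ≤ F x y)
    (hF : ∫⁻ x, ∫⁻ y, ENNReal.ofReal (F x y) ∂μ ∂μ ≠ ⊤)
    (hlt : μ.prod μ {z | f z.1 z.2 < g z.1 z.2} ≠ 0) :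
    ∫ x, ∫ y, f x y ∂μ ∂μ < ∫ x, ∫ y, g x y ∂μ ∂μ := by
  have hfi := integrable_uncurry_of_le_of_lintegral_ne_top hf hf0
    (fun x y => (hfg x y).trans (hgF x y)) hF
  have hgi := integrable_uncurry_of_le_of_lintegral_ne_top hg
    (fun x y => (hf0 x y).trans (hfg x y)) hgF hF
  have hpos : 0 < ∫ z, (uncurry g - uncurry f) z ∂μ.prod μ :=
    (integral_pos_iff_support_of_nonneg (f := uncurry g - uncurry f)
      (fun z => sub_nonneg.2 (hfg z.1 z.2)) (hgi.sub hfi)).2 <|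
        (pos_iff_ne_zero.2 hlt).trans_le (measure_mono fun z hz => (sub_pos.2 hz).ne')
  rw [integral_sub' hgi hfi, sub_pos] at hpos
  rwa [integral_integral hfi, integral_integral hgi]

end DoubleIntegral

section Energy

variable {α : Type*} [MeasurableSpace α] {μ : Measure α} {K : α → α → ℝ} {u : α → ℝ} {p : ℝ}

lemma aestronglyMeasurable_uncurry_comp_div {Φ : ℝ → ℝ → ℝ} (hΦ : Measurable (uncurry Φ))
    (hu : AEStronglyMeasurable u μ) (hK : AEMeasurable (uncurry K) (μ.prod μ)) :
    AEStronglyMeasurable (uncurry fun x y => Φ (u x) (u y) / K x y) (μ.prod μ) := by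
  have h : AEMeasurable (fun z : α × α => (u z.1, u z.2)) (μ.prod μ) :=
    hu.comp_fst.aemeasurable.prodMk hu.comp_snd.aemeasurable
  exact ((hΦ.comp_aemeasurable h).div hK).aestronglyMeasurable

variable [SFinite μ]

lemma integral_integral_abs_max_sub_max_rpow_div_le (hp : 1 ≤ p) (hu : AEStronglyMeasurable u μ)
    (hK : AEMeasurable (uncurry K) (μ.prod μ)) (hK0 : ∀ x y, 0 ≤ K x y)
    (hfin : ∫⁻ x, ∫⁻ y, ENNReal.ofReal (|u x - u y| ^ p / K x y) ∂μ ∂μ ≠ ⊤) :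
    ∫ x, ∫ y, |max (u x) 0 - max (u y) 0| ^ p / K x y ∂μ ∂μ ≤
      ∫ x, ∫ y, sgnPow p (u x - u y) * (max (u x) 0 - max (u y) 0) / K x y ∂μ ∂μ :=
  integral_integral_le_of_le
    (aestronglyMeasurable_uncurry_comp_div (Φ := fun a b => |max a 0 - max b 0| ^ p)
      (by fun_prop) hu hK)
    (aestronglyMeasurable_uncurry_comp_div
      (Φ := fun a b => sgnPow p (a - b) * (max a 0 - max b 0)) (by fun_prop) hu hK)
    (fun x y => div_nonneg (by positivity) (hK0 x y))
    (fun x y => div_le_div_of_nonneg_right (abs_max_sub_max_rpow_le_sgnPow_mul hp _ _) (hK0 x y))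
    (fun x y => div_le_div_of_nonneg_right (sgnPow_mul_max_sub_max_le_abs_rpow p _ _) (hK0 x y))
    hfin

lemma integral_integral_abs_max_sub_max_rpow_div_lt (hp : 1 < p) (hu : AEStronglyMeasurable u μ)
    (hK : AEMeasurable (uncurry K) (μ.prod μ)) (hK0 : ∀ x y, 0 ≤ K x y)
    (hKpos : ∀ x y, x ≠ y → 0 < K x y)
    (hfin : ∫⁻ x, ∫⁻ y, ENNReal.ofReal (|u x - u y| ^ p / K x y) ∂μ ∂μ ≠ ⊤)
    (hpos : μ {x | 0 < u x} ≠ 0) (hneg : μ {x | u x < 0} ≠ 0) :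
    ∫ x, ∫ y, |max (u x) 0 - max (u y) 0| ^ p / K x y ∂μ ∂μ <
      ∫ x, ∫ y, sgnPow p (u x - u y) * (max (u x) 0 - max (u y) 0) / K x y ∂μ ∂μ := by
  have hsub : {x | 0 < u x} ×ˢ {y | u y < 0} ⊆ {z : α × α |
      |max (u z.1) 0 - max (u z.2) 0| ^ p / K z.1 z.2 <
        sgnPow p (u z.1 - u z.2) * (max (u z.1) 0 - max (u z.2) 0) / K z.1 z.2} := by
    rintro ⟨x, y⟩ ⟨hx, hy : u y < 0⟩
    have hxy : x ≠ y := by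
      rintro rfl
      exact (hx.trans hy).false
    exact div_lt_div_of_pos_right (abs_max_sub_max_rpow_lt_sgnPow_mul hp hx hy) (hKpos x y hxy)
  refine integral_integral_lt_of_measure_setOf_lt_ne_zero
    (aestronglyMeasurable_uncurry_comp_div (Φ := fun a b => |max a 0 - max b 0| ^ p)
      (by fun_prop) hu hK)
    (aestronglyMeasurable_uncurry_comp_div
      (Φ := fun a b => sgnPow p (a - b) * (max a 0 - max b 0)) (by fun_prop) hu hK)
    (fun x y => div_nonneg (by positivity) (hK0 x y))
    (fun x y => div_le_div_of_nonneg_right (abs_max_sub_max_rpow_le_sgnPow_mul hp.le _ _) (hK0 x y))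
    (fun x y => div_le_div_of_nonneg_right (sgnPow_mul_max_sub_max_le_abs_rpow p _ _) (hK0 x y))
    hfin fun h => mul_ne_zero hpos hneg ?_
  rw [← Measure.prod_prod]
  exact measure_mono_null hsub h

end Energy

lemma gagliardoFinite.of_abs_sub_le {N : ℕ} {s p : ℝ} {u v : EuclideanSpace ℝ (Fin N) → ℝ}
    (hp : 0 ≤ p) (hu : gagliardoFinite N s p u) (h : ∀ x y, |v x - v y| ≤ |u x - u y|) :
    gagliardoFinite N s p v :=
  ne_top_of_le_ne_top hu <| lintegral_mono fun x => lintegral_mono fun y =>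
    ENNReal.ofReal_le_ofReal <| div_le_div_of_nonneg_right
      (Real.rpow_le_rpow (abs_nonneg _) (h x y) hp) (by positivity)

lemma memW.posPart {N : ℕ} {s p : ℝ} {Ω : Set (EuclideanSpace ℝ (Fin N))}
    {u : EuclideanSpace ℝ (Fin N) → ℝ} (hp : 0 ≤ p) (hu : memW N s p Ω u) :
    memW N s p Ω fun x => max (u x) 0 :=
  ⟨(hu.1.aemeasurable.max aemeasurable_const).aestronglyMeasurable,
    hu.2.1.of_abs_sub_le hp fun x y => abs_max_sub_max_le_abs _ _ _,
    fun x hx => by simp [hu.2.2 x hx]⟩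

theorem stmt_10_general (N : ℕ) (s p q : ℝ) (hp : 1 < p) (hpq : p ≤ q)
    (Ω : Set (EuclideanSpace ℝ (Fin N)))
    (u : EuclideanSpace ℝ (Fin N) → ℝ)
    (hu : isWeakSolution N s p q Ω u)
    (hpos : nontrivial' N (fun x => max (u x) 0)) :
    gagliardo N s p (fun x => max (u x) 0) ≤ (∫ x in Ω, (max (u x) 0) ^ q) ∧
      (nontrivial' N (fun x => max (-u x) 0) →
        gagliardo N s p (fun x => max (u x) 0) < ∫ x in Ω, (max (u x) 0) ^ q) := by
  obtain ⟨huW, hweak⟩ := hu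
  have htest : ∫ x, ∫ y, sgnPow p (u x - u y) * (max (u x) 0 - max (u y) 0) /
      ‖x - y‖ ^ ((N : ℝ) + p * s) = ∫ x in Ω, max (u x) 0 ^ q := by
    rw [hweak _ (huW.posPart (by linarith))]
    exact integral_congr_ae <| ae_of_all _ fun x =>
      abs_rpow_sub_two_mul_self_mul_max (by linarith) (u x)
  have hK : AEMeasurable (uncurry fun x y : EuclideanSpace ℝ (Fin N) =>
      ‖x - y‖ ^ ((N : ℝ) + p * s)) (volume.prod volume) := by fun_prop
  have hK0 (x y : EuclideanSpace ℝ (Fin N)) : 0 ≤ ‖x - y‖ ^ ((N : ℝ) + p * s) := by positivity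
  have hKpos (x y : EuclideanSpace ℝ (Fin N)) (hxy : x ≠ y) : 0 < ‖x - y‖ ^ ((N : ℝ) + p * s) :=
    Real.rpow_pos_of_pos (norm_pos_iff.2 (sub_ne_zero.2 hxy)) _
  refine ⟨(integral_integral_abs_max_sub_max_rpow_div_le hp.le huW.1 hK hK0 huW.2.1).trans_eq htest,
    fun hneg => ?_⟩
  have hneg' : volume {x | u x < 0} ≠ 0 := by simpa using measure_setOf_pos_ne_zero hneg
  exact (integral_integral_abs_max_sub_max_rpow_div_lt hp huW.1 hK hK0 hKpos huW.2.1
    (measure_setOf_pos_ne_zero hpos) hneg').trans_eq htest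

theorem stmt_10 (N : ℕ) (s p q : ℝ) (hp : 1 < p) (hpq : p ≤ q) (hs : s ∈ Ioo (0:ℝ) 1)
    (hN : p * s < N) (Ω : Set (EuclideanSpace ℝ (Fin N))) (hΩ : IsOpen Ω)
    (u : EuclideanSpace ℝ (Fin N) → ℝ)
    (hu : isWeakSolution N s p q Ω u)
    (hpos : nontrivial' N (fun x => max (u x) 0)) :
    gagliardo N s p (fun x => max (u x) 0) ≤ (∫ x in Ω, (max (u x) 0) ^ q) ∧
      (nontrivial' N (fun x => max (-u x) 0) →
        gagliardo N s p (fun x => max (u x) 0) < ∫ x in Ω, (max (u x) 0) ^ q) :=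
  stmt_10_general N s p q hp hpq Ω u hu hpos
end

section
/- Let Ω ⊂ ℝᴺ be bounded, u_n ∈ L^{p*}(ℝᴺ) nonnegative with u_n = 0 outside Ω, and suppose |u_n|^{p*} converges weakly-* to S^{N/(ps)} δ_{x̄} as measures. Suppose |x̄| ≥ r and B_r(x̄) ∩ B_r(−x̄) = ∅. If each u_n is radial (u_n(x) depends only on |x|), then for all large n: ∫_{B_r(x̄)} u_n^{p*} dx = ∫_{B_r(−x̄)} u_n^{p*} dx > (3/4) S^{N/(ps)} while ∫ u_n^{p*} dx < (3/2) S^{N/(ps)}, a contradiction; hence u_n is eventually non-radial. -/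
/-!
A radial function is even, so integrating it against a test function `φ` or against the
reflection `x ↦ φ (-x)` gives the same value. In the weak-* limit `c δ_{x̄}` these values become
`c φ x̄` and `c φ (-x̄)`, and a Urysohn function separating `x̄` from `-x̄` forces `c = 0`,
whereas `c = S^{N/(ps)} > 0`.
-/

open MeasureTheory Filter Set Metric Topology
open scoped BoundedContinuousFunction

section EvenWeights

variable {E : Type*} [AddGroup E] [MeasurableSpace E] [MeasurableNeg E]
  {μ : Measure E} [μ.IsNegInvariant]

theorem integral_comp_neg_mul_of_even (f g : E → ℝ) (hg : ∀ x, g (-x) = g x) :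
    ∫ x, f (-x) * g x ∂μ = ∫ x, f x * g x ∂μ := by
  simpa only [hg] using integral_neg_eq_self (fun x => f x * g x) μ

theorem eq_zero_of_tendsto_integral_mul_dirac_of_even [TopologicalSpace E] [ContinuousNeg E]
    [NormalSpace E] [T1Space E] {ι : Type*} {l : Filter ι} [l.NeBot] (g : ι → E → ℝ)
    (hg : ∀ i x, g i (-x) = g i x) {c : ℝ} {x₀ : E} (hx₀ : -x₀ ≠ x₀)
    (hlim : ∀ φ : E →ᵇ ℝ, Tendsto (fun i => ∫ x, φ x * g i x ∂μ) l (𝓝 (c * φ x₀))) :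
    c = 0 := by
  obtain ⟨φ, hφ_neg, hφ_pos, -⟩ := exists_bounded_zero_one_of_closed isClosed_singleton
    isClosed_singleton (disjoint_singleton.mpr hx₀)
  let φ_refl : E →ᵇ ℝ := φ.compContinuous ⟨Neg.neg, continuous_neg⟩
  have h_refl : Tendsto (fun i => ∫ x, φ x * g i x ∂μ) l (𝓝 (c * φ (-x₀))) := by
    simpa only [φ_refl, BoundedContinuousFunction.compContinuous_apply, ContinuousMap.coe_mk,
      integral_comp_neg_mul_of_even _ _ (hg _)] using hlim φ_refl
  have h_eq := tendsto_nhds_unique (hlim φ) h_refl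
  rwa [hφ_pos rfl, hφ_neg rfl, Pi.one_apply, Pi.zero_apply, mul_one, mul_zero] at h_eq

end EvenWeights

theorem stmt_15_general (N : ℕ) (s p S r : ℝ) (hS : 0 < S) (hr : 0 < r)
    (u : ℕ → EuclideanSpace ℝ (Fin N) → ℝ)
    (xbar : EuclideanSpace ℝ (Fin N))
    (hballs : Disjoint (ball xbar r) (ball (-xbar) r))
    -- tight (weak-*) convergence of |u_n|^{p^*} to S^{N/(ps)} δ_{xbar}
    (hconc : ∀ φ : BoundedContinuousFunction (EuclideanSpace ℝ (Fin N)) ℝ,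
      Tendsto (fun n => ∫ x, φ x * (u n x) ^ (N * p / (N - p * s))) atTop
        (nhds (S ^ ((N : ℝ) / (p * s)) * φ xbar)))
    -- each u_n is radial
    (hradial : ∀ n, ∀ x y : EuclideanSpace ℝ (Fin N), ‖x‖ = ‖y‖ → u n x = u n y) :
    False := by
  have hxbar : -xbar ≠ xbar := (hballs.ne_of_mem (mem_ball_self hr) (mem_ball_self hr)).symm
  have hmass := eq_zero_of_tendsto_integral_mul_dirac_of_even (μ := volume)
    (fun n x => u n x ^ (N * p / (N - p * s))) (fun n x => by rw [hradial n (-x) x (norm_neg x)])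
    hxbar hconc
  exact (Real.rpow_pos_of_pos hS _).ne' hmass

theorem stmt_15 (N : ℕ) (s p S r : ℝ) (hp : 1 < p) (hs : s ∈ Ioo (0:ℝ) 1)
    (hN : p * s < N) (hS : 0 < S) (hr : 0 < r)
    (Ω : Set (EuclideanSpace ℝ (Fin N))) (hΩb : Bornology.IsBounded Ω)
    (u : ℕ → EuclideanSpace ℝ (Fin N) → ℝ)
    (hnonneg : ∀ n x, 0 ≤ u n x)
    (hzero : ∀ n, ∀ x ∉ Ω, u n x = 0)
    (hLp : ∀ n, MemLp (u n) (ENNReal.ofReal (N * p / (N - p * s))) volume)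
    (xbar : EuclideanSpace ℝ (Fin N)) (hxbar : r ≤ ‖xbar‖)
    (hballs : Disjoint (ball xbar r) (ball (-xbar) r))
    -- tight (weak-*) convergence of |u_n|^{p^*} to S^{N/(ps)} δ_{xbar}
    (hconc : ∀ φ : BoundedContinuousFunction (EuclideanSpace ℝ (Fin N)) ℝ,
      Tendsto (fun n => ∫ x, φ x * (u n x) ^ (N * p / (N - p * s))) atTop
        (nhds (S ^ ((N : ℝ) / (p * s)) * φ xbar)))
    -- each u_n is radial
    (hradial : ∀ n, ∀ x y : EuclideanSpace ℝ (Fin N), ‖x‖ = ‖y‖ → u n x = u n y) :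
    False :=
  stmt_15_general N s p S r hS hr u xbar hballs hconc hradial
end

section
/- Let 0 < 1/R < 1 and let Ω̃ = B₁ \ B_{1/R} ⊂ ℝᴺ be the annulus between radii 1/R and 1. Fix a unit vector ν and for λ ∈ (−1, 0) let R^ν_λ(x) = x + 2(λ − x·ν)ν be the reflection across the hyperplane {x·ν = λ}, and let Ω̃^ν_λ = Ω̃ ∩ {x·ν < λ}. Then R^ν_λ(Ω̃^ν_λ) ⊆ Ω̃ if and only if −1 < λ ≤ −(1 + 1/R)/2. -/
/-!
The identity `‖R x‖² = ‖x‖² + 4λ(λ - ⟪x, ν⟫)` shows that the reflection moves every point of the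
cap `{⟪x, ν⟫ < λ}` closer to the origin (as `λ < 0`), so only the inner sphere can be crossed; by
Cauchy–Schwarz `‖R x‖ ≥ |‖x‖ + 2λ|`, which exceeds `1/R` for all `‖x‖ < 1` exactly when
`λ ≤ -(1 + 1/R)/2`. Conversely, for larger `λ` a point `-s ν` of the cap on the axis is reflected to
`(2λ + s) ν`, which lands in the hole for a suitable `s < 1`.
-/

open Set Metric
open scoped RealInnerProductSpace

variable {E : Type*} [NormedAddCommGroup E]

lemma mem_ball_diff_closedBall_zero_iff {x : E} {r s : ℝ} :
    x ∈ ball (0 : E) s \ closedBall 0 r ↔ r < ‖x‖ ∧ ‖x‖ < s := by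
  rw [mem_sdiff, mem_ball_zero_iff, mem_closedBall_zero_iff, not_le, and_comm]

variable [InnerProductSpace ℝ E]

def hyperplaneReflection (ν : E) (lam : ℝ) (x : E) : E := x + (2 * (lam - ⟪x, ν⟫)) • ν

section UnitNormal

variable {ν : E} {lam : ℝ}

lemma norm_sq_hyperplaneReflection (hν : ‖ν‖ = 1) (x : E) :
    ‖hyperplaneReflection ν lam x‖ ^ 2 = ‖x‖ ^ 2 + 4 * lam * (lam - ⟪x, ν⟫) := by
  rw [hyperplaneReflection, norm_add_sq_real, real_inner_smul_right, norm_smul, hν, mul_one,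
    Real.norm_eq_abs, sq_abs]
  ring

lemma hyperplaneReflection_smul_self (hν : ‖ν‖ = 1) (c : ℝ) :
    hyperplaneReflection ν lam (c • ν) = (2 * lam - c) • ν := by
  rw [hyperplaneReflection, real_inner_smul_left, real_inner_self_eq_norm_sq, hν, ← add_smul]
  congr 1
  ring

lemma norm_hyperplaneReflection_lt (hν : ‖ν‖ = 1) {x : E} (hlam : lam < 0) (hx : ⟪x, ν⟫ < lam) :
    ‖hyperplaneReflection ν lam x‖ < ‖x‖ := by
  have hsq := norm_sq_hyperplaneReflection hν (lam := lam) x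
  exact (sq_lt_sq₀ (norm_nonneg _) (norm_nonneg _)).mp (by nlinarith)

lemma abs_norm_add_two_mul_le_norm_hyperplaneReflection (hν : ‖ν‖ = 1) (hlam : lam ≤ 0) (x : E) :
    |‖x‖ + 2 * lam| ≤ ‖hyperplaneReflection ν lam x‖ := by
  have hsq := norm_sq_hyperplaneReflection hν (lam := lam) x
  have hcs : -‖x‖ ≤ ⟪x, ν⟫ := by
    simpa [hν] using neg_le_of_abs_le (abs_real_inner_le_norm x ν)
  exact abs_le_of_sq_le_sq (by nlinarith) (norm_nonneg _)

lemma hyperplaneReflection_mem_annulus (hν : ‖ν‖ = 1) {r : ℝ} (hr : 0 ≤ r)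
    (hlam : lam ≤ -((1 + r) / 2)) {x : E} (hx : x ∈ ball (0 : E) 1 \ closedBall 0 r)
    (hxν : ⟪x, ν⟫ < lam) :
    hyperplaneReflection ν lam x ∈ ball (0 : E) 1 \ closedBall 0 r := by
  rw [mem_ball_diff_closedBall_zero_iff] at hx ⊢
  have hlam0 : lam < 0 := by linarith
  refine ⟨?_, (norm_hyperplaneReflection_lt hν hlam0 hxν).trans hx.2⟩
  calc r < |‖x‖ + 2 * lam| := by rw [abs_of_neg (by linarith)]; linarith
    _ ≤ _ := abs_norm_add_two_mul_le_norm_hyperplaneReflection hν hlam0.le x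

lemma exists_hyperplaneReflection_not_mem_annulus (hν : ‖ν‖ = 1) {r : ℝ} (hr0 : 0 < r)
    (hr1 : r < 1) (hlam : lam ∈ Ioo (-1 : ℝ) 0) (hlam' : -((1 + r) / 2) < lam) :
    ∃ x ∈ ball (0 : E) 1 \ closedBall 0 r, ⟪x, ν⟫ < lam ∧
      hyperplaneReflection ν lam x ∉ ball (0 : E) 1 \ closedBall 0 r := by
  obtain ⟨hlam1, hlam0⟩ := hlam
  -- `-s ν` lies in the cap iff `r < s < 1` and `-λ < s`; its image `(2λ + s) ν` is in the hole
  -- iff `|2λ + s| ≤ r`.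
  obtain ⟨s, hsL, hsU⟩ := exists_between (a₁ := max r (max (-lam) (-2 * lam - r)))
    (a₂ := min 1 (-2 * lam + r)) (by simp only [lt_min_iff, max_lt_iff]; grind)
  simp only [max_lt_iff, lt_min_iff] at hsL hsU
  have hnorm (c : ℝ) : ‖c • ν‖ = |c| := by rw [norm_smul, hν, mul_one, Real.norm_eq_abs]
  refine ⟨(-s) • ν, ?_, ?_, ?_⟩
  · rw [mem_ball_diff_closedBall_zero_iff, hnorm, abs_neg, abs_of_pos (by linarith)]
    exact ⟨hsL.1, hsU.1⟩
  · rw [real_inner_smul_left, real_inner_self_eq_norm_sq, hν]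
    linarith
  · rw [hyperplaneReflection_smul_self hν, mem_ball_diff_closedBall_zero_iff, hnorm,
      sub_neg_eq_add]
    exact fun h => h.1.not_ge (abs_le.mpr ⟨by linarith, by linarith⟩)

end UnitNormal

theorem stmt_18_general (N : ℕ) (R : ℝ) (hR : 1 < R)
    (ν : EuclideanSpace ℝ (Fin N)) (hν : ‖ν‖ = 1)
    (lam : ℝ) (hlam : lam ∈ Ioo (-1 : ℝ) 0) :
    (((fun x : EuclideanSpace ℝ (Fin N) => x + (2 * (lam - ⟪x, ν⟫)) • ν) ''
        ((ball (0 : EuclideanSpace ℝ (Fin N)) 1 \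
            closedBall (0 : EuclideanSpace ℝ (Fin N)) (1 / R)) ∩
          {x : EuclideanSpace ℝ (Fin N) | ⟪x, ν⟫ < lam})) ⊆
        (ball (0 : EuclideanSpace ℝ (Fin N)) 1 \
          closedBall (0 : EuclideanSpace ℝ (Fin N)) (1 / R))) ↔
      lam ≤ -((1 + 1 / R) / 2) := by
  have hr0 : 0 < 1 / R := by positivity
  have hr1 : 1 / R < 1 := by rw [div_lt_one (by linarith)]; exact hR
  constructor
  · intro hsub
    by_contra! hlam'
    obtain ⟨x, hx, hxν, hout⟩ := exists_hyperplaneReflection_not_mem_annulus hν hr0 hr1 hlam hlam'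
    exact hout (hsub ⟨x, ⟨hx, hxν⟩, rfl⟩)
  · rintro hlam' _ ⟨x, ⟨hx, hxν⟩, rfl⟩
    exact hyperplaneReflection_mem_annulus hν hr0.le hlam' hx hxν

theorem stmt_18 (N : ℕ) (hN : 1 ≤ N) (R : ℝ) (hR : 1 < R)
    (ν : EuclideanSpace ℝ (Fin N)) (hν : ‖ν‖ = 1)
    (lam : ℝ) (hlam : lam ∈ Ioo (-1 : ℝ) 0) :
    (((fun x : EuclideanSpace ℝ (Fin N) => x + (2 * (lam - ⟪x, ν⟫)) • ν) ''
        ((ball (0 : EuclideanSpace ℝ (Fin N)) 1 \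
            closedBall (0 : EuclideanSpace ℝ (Fin N)) (1 / R)) ∩
          {x : EuclideanSpace ℝ (Fin N) | ⟪x, ν⟫ < lam})) ⊆
        (ball (0 : EuclideanSpace ℝ (Fin N)) 1 \
          closedBall (0 : EuclideanSpace ℝ (Fin N)) (1 / R))) ↔
      lam ≤ -((1 + 1 / R) / 2) :=
  stmt_18_general N R hR ν hν lam hlam
end
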